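/- arXiv:2008.12500 — 5 statements merged into one kernel-verified Lean document; each statement's English description precedes it below -/
import Mathlib

section
/- Let h : [n] → [n] be a Hessenberg function and w ∈ S_n with ℓ(w) > ℓ(s_i w), i.e., w^{-1}(i+1) < w^{-1}(i). Define the directed graph G_{w,h} on [n] with edge j → i iff j < i ≤ h(j) and w(j) < w(i). If w^{-1}(i) > h(w^{-1}(i+1)), then E(G_{w,h}) = E(G_{s_i w, h}) and ℓ_h(s_i w) = ℓ_h(w). If instead w^{-1}(i) ≤ h(w^{-1}(i+1)), then E(G_{s_i w, h}) = E(G_{w,h}) ∪ {w^{-1}(i+1) → w^{-1}(i)} and ℓ_h(w) = ℓ_h(s_i w) + 1. -/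
/-- The edge relation of the graph `G_{w,h}`: an edge j → i iff j < i ≤ h(j) and
w(j) < w(i).  Positions are 0-indexed, and `h` takes 1-indexed values, so the
condition `i ≤ h(j)` reads `(i : ℕ) + 1 ≤ h j`. -/
def hessEdge {n : ℕ} (h : Fin n → ℕ) (w : Equiv.Perm (Fin n)) (p : Fin n × Fin n) : Prop :=
  p.1 < p.2 ∧ (p.2 : ℕ) + 1 ≤ h p.1 ∧ w p.1 < w p.2

/-- ℓ_h(w) = #{(j,i) : j < i ≤ h(j), w(j) > w(i)}. -/
def lenH {n : ℕ} (h : Fin n → ℕ) (w : Equiv.Perm (Fin n)) : ℕ :=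
  (Finset.univ.filter (fun p : Fin n × Fin n =>
    p.1 < p.2 ∧ (p.2 : ℕ) + 1 ≤ h p.1 ∧ w p.2 < w p.1)).card

/-!
Left multiplication by `s_i` only exchanges the values `i` and `i + 1`, so among all pairs of
positions it reverses the relative order of `(w⁻¹(i+1), w⁻¹(i))` alone, turning that non-edge into
an edge exactly when it lies in the Hessenberg window. Inside the window every pair is either an
edge or an `h`-inversion, so `ℓ_h(w) + |E(G_{w,h})|` does not depend on `w`, and the statements
about `ℓ_h` follow from those about the edge sets.
-/

open Finset

theorem Equiv.swap_lt_swap_iff_of_covBy {α : Type*} [LinearOrder α] {a b x y : α} (hab : a ⋖ b)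
    (hxy : ¬(x = a ∧ y = b)) (hyx : ¬(x = b ∧ y = a)) :
    swap a b x < swap a b y ↔ x < y := by
  have hx := covBy_iff_lt_iff_le_left.1 hab (z := x)
  have hy := covBy_iff_lt_iff_le_left.1 hab (z := y)
  have := hab.lt
  simp only [swap_apply_def]
  split_ifs <;> subst_vars <;> grind

theorem Equiv.Perm.swap_mul_lt_swap_mul_iff_of_covBy {α : Type*} [LinearOrder α] {a b : α}
    (hab : a ⋖ b) (w : Perm α) {x y : α} (hxy : ¬(x = w⁻¹ a ∧ y = w⁻¹ b))
    (hyx : ¬(x = w⁻¹ b ∧ y = w⁻¹ a)) :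
    (swap a b * w) x < (swap a b * w) y ↔ w x < w y := by
  simp only [eq_inv_iff_eq] at hxy hyx
  exact swap_lt_swap_iff_of_covBy hab hxy hyx

section Hessenberg

variable {n : ℕ} (h : Fin n → ℕ)

theorem lenH_add_ncard_hessEdge (w : Equiv.Perm (Fin n)) :
    lenH h w + {p | hessEdge h w p}.ncard
      = #(univ.filter fun p : Fin n × Fin n => p.1 < p.2 ∧ (p.2 : ℕ) + 1 ≤ h p.1) := by
  classical
  rw [← coe_filter_univ, Set.ncard_coe_finset, lenH,
    ← card_filter_add_card_filter_not
      (s := univ.filter fun p : Fin n × Fin n => p.1 < p.2 ∧ (p.2 : ℕ) + 1 ≤ h p.1)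
      (fun p : Fin n × Fin n => w p.2 < w p.1), filter_filter, filter_filter]
  congr 2
  · exact filter_congr fun _ _ => and_assoc.symm
  · refine filter_congr fun p _ => ?_
    rw [hessEdge, not_lt, and_assoc]
    exact and_congr_right fun hp => and_congr_right fun _ =>
      (w.injective.ne hp.ne).le_iff_lt.symm

theorem not_hessEdge_inv {i j : Fin n} (hij : i < j) (w : Equiv.Perm (Fin n)) :
    ¬hessEdge h w (w⁻¹ j, w⁻¹ i) := by
  simp [hessEdge, hij.not_gt]

theorem hessEdge_swap_mul_iff {i j : Fin n} (hij : i ⋖ j) {w : Equiv.Perm (Fin n)}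
    (hlen : w⁻¹ j < w⁻¹ i) (p : Fin n × Fin n) :
    hessEdge h (Equiv.swap i j * w) p
      ↔ hessEdge h w p ∨ (p = (w⁻¹ j, w⁻¹ i) ∧ ((w⁻¹ i : Fin n) : ℕ) + 1 ≤ h (w⁻¹ j)) := by
  obtain ⟨x, y⟩ := p
  by_cases hxy : x = w⁻¹ j ∧ y = w⁻¹ i
  · obtain ⟨rfl, rfl⟩ := hxy
    have hswap : (Equiv.swap i j * w) (w⁻¹ j) < (Equiv.swap i j * w) (w⁻¹ i) := by
      simpa using hij.lt
    rw [or_iff_right (not_hessEdge_inv h hij.lt w)]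
    simp only [hessEdge, hlen, hswap, true_and, and_true]
  by_cases hyx : x = w⁻¹ i ∧ y = w⁻¹ j
  · obtain ⟨rfl, rfl⟩ := hyx
    simp only [hessEdge, hlen.not_gt, false_and, Prod.mk.injEq, hlen.ne', false_or]
  · simp only [hessEdge, w.swap_mul_lt_swap_mul_iff_of_covBy hij hyx hxy, Prod.mk.injEq, hxy,
      false_and, or_false]

end Hessenberg

theorem stmt6_general (n : ℕ) (h : Fin n → ℕ)
    (w : Equiv.Perm (Fin n)) (i : Fin n) (hi : (i : ℕ) + 1 < n)
    (hlen : w⁻¹ ⟨(i : ℕ) + 1, hi⟩ < w⁻¹ i) :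
    (h (w⁻¹ ⟨(i : ℕ) + 1, hi⟩) < ((w⁻¹ i : Fin n) : ℕ) + 1 →
      ({p : Fin n × Fin n | hessEdge h w p}
          = {p : Fin n × Fin n | hessEdge h (Equiv.swap i ⟨(i : ℕ) + 1, hi⟩ * w) p}
        ∧ lenH h (Equiv.swap i ⟨(i : ℕ) + 1, hi⟩ * w) = lenH h w))
    ∧ (((w⁻¹ i : Fin n) : ℕ) + 1 ≤ h (w⁻¹ ⟨(i : ℕ) + 1, hi⟩) →
      ({p : Fin n × Fin n | hessEdge h (Equiv.swap i ⟨(i : ℕ) + 1, hi⟩ * w) p}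
          = {p : Fin n × Fin n | hessEdge h w p} ∪ {(w⁻¹ ⟨(i : ℕ) + 1, hi⟩, w⁻¹ i)}
        ∧ lenH h w = lenH h (Equiv.swap i ⟨(i : ℕ) + 1, hi⟩ * w) + 1)) := by
  set j : Fin n := ⟨(i : ℕ) + 1, hi⟩
  have hcov : i ⋖ j := by
    refine covBy_iff_lt_iff_le_left.2 fun {z} => ?_
    simp only [j, Fin.lt_def, Fin.le_def]
    omega
  have hedge := hessEdge_swap_mul_iff h hcov hlen
  have hcount := lenH_add_ncard_hessEdge h w
  have hcount' := lenH_add_ncard_hessEdge h (Equiv.swap i j * w)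
  refine ⟨fun hout => ?_, fun hin => ?_⟩
  · have hedges : {p | hessEdge h w p} = {p | hessEdge h (Equiv.swap i j * w) p} := by
      ext p
      simp only [Set.mem_ofPred_eq, hedge, hout.not_ge, and_false, or_false]
    rw [← hedges] at hcount'
    exact ⟨hedges, by omega⟩
  · have hedges : {p | hessEdge h (Equiv.swap i j * w) p}
        = {p | hessEdge h w p} ∪ {(w⁻¹ j, w⁻¹ i)} := by
      ext p
      simp only [Set.mem_ofPred_eq, Set.mem_union, Set.mem_singleton_iff, hedge, hin, and_true]
    rw [hedges, Set.union_singleton,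
      Set.ncard_insert_of_notMem (s := {p | hessEdge h w p}) (not_hessEdge_inv h hcov.lt w)]
      at hcount'
    exact ⟨hedges, by omega⟩

/-- Lemma 4.4: comparison of `G_{w,h}` and `G_{s_i w, h}` when ℓ(w) > ℓ(s_i w). -/
theorem stmt6 (n : ℕ) (h : Fin n → ℕ) (hmono : Monotone h)
    (hge : ∀ i : Fin n, (i : ℕ) + 1 ≤ h i) (hle : ∀ i : Fin n, h i ≤ n)
    (w : Equiv.Perm (Fin n)) (i : Fin n) (hi : (i : ℕ) + 1 < n)
    (hlen : w⁻¹ ⟨(i : ℕ) + 1, hi⟩ < w⁻¹ i) :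
    (h (w⁻¹ ⟨(i : ℕ) + 1, hi⟩) < ((w⁻¹ i : Fin n) : ℕ) + 1 →
      ({p : Fin n × Fin n | hessEdge h w p}
          = {p : Fin n × Fin n | hessEdge h (Equiv.swap i ⟨(i : ℕ) + 1, hi⟩ * w) p}
        ∧ lenH h (Equiv.swap i ⟨(i : ℕ) + 1, hi⟩ * w) = lenH h w))
    ∧ (((w⁻¹ i : Fin n) : ℕ) + 1 ≤ h (w⁻¹ ⟨(i : ℕ) + 1, hi⟩) →
      ({p : Fin n × Fin n | hessEdge h (Equiv.swap i ⟨(i : ℕ) + 1, hi⟩ * w) p}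
          = {p : Fin n × Fin n | hessEdge h w p} ∪ {(w⁻¹ ⟨(i : ℕ) + 1, hi⟩, w⁻¹ i)}
        ∧ lenH h w = lenH h (Equiv.swap i ⟨(i : ℕ) + 1, hi⟩ * w) + 1)) :=
  stmt6_general n h w i hi hlen
end

section
/- Let h = (n,n,...,n) be the constant Hessenberg function. Then for the associated graph G_{w,h} (edge j → i iff j < i and w(j) < w(i)), a subset {i_1 < ⋯ < i_j} of [n] is reachable from [j] = {1,...,j} if and only if {w(i_1),...,w(i_j)}↑ ≥ {w(1),...,w(j)}↑ componentwise, where {·}↑ denotes arranging in increasing order. -/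
/-!
Reachability in `G_{w,h}` is the product order: `x` reaches `y` iff `x ≤ y` and `w x ≤ w y`.
For equinumerous finite sets `S`, `T` of a linear order, the increasing rearrangement of `T`
dominates that of `S` iff `#{y ∈ T | y < t} ≤ #{x ∈ S | x < t}` for every threshold `t`, iff
some bijection `σ : S → T` has `x ≤ σ x` (match in sorted order). The counting condition is
unchanged by deleting the common elements of `S` and `T`. Applied to `S = w [j]` and `T = w A`,
this gives a `w`-increasing matching of `[j] \ A` with `A \ [j]`; extended by the identity on
`[j] ∩ A`, it also increases positions, since it only moves indices below `j` to indices at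
least `j`.
-/

open Finset Function

namespace Relation

variable {α β : Type*} [PartialOrder α] [PartialOrder β] {g : α → β}

theorem reflTransGen_lt_and_lt_iff (hg : Injective g) {a b : α} :
    ReflTransGen (fun x y => x < y ∧ g x < g y) a b ↔ a ≤ b ∧ g a ≤ g b := by
  refine ⟨fun h => ?_, fun ⟨hab, hgab⟩ => ?_⟩
  · induction h with
    | refl => exact ⟨le_rfl, le_rfl⟩
    | tail _ hbc ih => exact ⟨ih.1.trans hbc.1.le, ih.2.trans hbc.2.le⟩
  · obtain rfl | hab := hab.eq_or_lt
    · exact .refl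
    · exact .single ⟨hab, hgab.lt_of_ne (hg.ne hab.ne)⟩

end Relation

namespace Finset
variable {β : Type*} [LinearOrder β] {S T : Finset β} {k : ℕ}

theorem card_filter_lt_orderEmbOfFin (hS : #S = k) (d : Fin k) :
    #{x ∈ S | x < S.orderEmbOfFin hS d} = d := by
  have : {x ∈ S | x < S.orderEmbOfFin hS d} = (Iio d).map (S.orderEmbOfFin hS).toEmbedding := by
    ext x
    simp only [mem_filter, mem_map, mem_Iio, RelEmbedding.coe_toEmbedding]
    constructor
    · rintro ⟨hx, hlt⟩
      obtain ⟨e, rfl⟩ : x ∈ Set.range (S.orderEmbOfFin hS) := by rwa [range_orderEmbOfFin]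
      exact ⟨e, by simpa using hlt, rfl⟩
    · rintro ⟨e, he, rfl⟩
      exact ⟨orderEmbOfFin_mem S hS e, by simpa using he⟩
  rw [this, card_map, Fin.card_Iio]

theorem lt_card_filter_lt_of_orderEmbOfFin_lt (hS : #S = k) {d : Fin k} {t : β}
    (h : S.orderEmbOfFin hS d < t) : (d : ℕ) < #{x ∈ S | x < t} := by
  rw [← card_filter_lt_orderEmbOfFin hS d]
  refine card_lt_card ⟨monotone_filter_right _ fun x _ hx => hx.trans h, fun hsub => ?_⟩
  have := hsub (mem_filter.2 ⟨orderEmbOfFin_mem S hS d, h⟩)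
  exact (mem_filter.1 this).2.false

theorem orderEmbOfFin_le_iff_card_filter_lt (hS : #S = k) (hT : #T = k) :
    (∀ d, S.orderEmbOfFin hS d ≤ T.orderEmbOfFin hT d) ↔
      ∀ t, #{y ∈ T | y < t} ≤ #{x ∈ S | x < t} := by
  constructor
  · intro h t
    by_contra! hlt
    have hk : #{x ∈ S | x < t} < k := hT ▸ hlt.trans_le (card_filter_le _ _)
    set d : Fin k := ⟨_, hk⟩
    have hSd : t ≤ S.orderEmbOfFin hS d := by
      by_contra! h'
      exact (lt_card_filter_lt_of_orderEmbOfFin_lt hS h').false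
    have hTd : T.orderEmbOfFin hT d < t := by
      by_contra! h'
      have := card_le_card (monotone_filter_right T fun y _ (hy : y < t) => hy.trans_le h')
      rw [card_filter_lt_orderEmbOfFin] at this
      exact this.not_gt hlt
    exact (hSd.trans (h d)).not_gt hTd
  · intro h d
    by_contra! hlt
    have := lt_card_filter_lt_of_orderEmbOfFin_lt hT hlt
    rw [← card_filter_lt_orderEmbOfFin hS d] at this
    exact (h _).not_gt this

theorem card_filter_sdiff_le_iff {α : Type*} [DecidableEq α] (s t : Finset α) (p : α → Prop)
    [DecidablePred p] :
    #{x ∈ t \ s | p x} ≤ #{x ∈ s \ t | p x} ↔ #{x ∈ t | p x} ≤ #{x ∈ s | p x} := by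
  have filter_sdiff (a b : Finset α) :
      {x ∈ a \ b | p x} = {x ∈ a | p x} \ {x ∈ b | p x} := by
    grind
  rw [filter_sdiff, filter_sdiff, card_sdiff_le_card_sdiff_iff]

theorem exists_equiv_le_of_orderEmbOfFin_le (hS : #S = k) (hT : #T = k)
    (h : ∀ d, S.orderEmbOfFin hS d ≤ T.orderEmbOfFin hT d) :
    ∃ σ : S ≃ T, ∀ x : S, (x : β) ≤ σ x :=
  ⟨(S.orderIsoOfFin hS).symm.toEquiv.trans (T.orderIsoOfFin hT).toEquiv, fun x => by
    simpa [← coe_orderIsoOfFin_apply] using h ((S.orderIsoOfFin hS).symm x)⟩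

theorem exists_equiv_sdiff_le_of_card_filter_lt (hST : #S = #T)
    (h : ∀ t, #{y ∈ T | y < t} ≤ #{x ∈ S | x < t}) :
    ∃ σ : ↥(S \ T) ≃ ↥(T \ S), ∀ x : ↥(S \ T), (x : β) ≤ σ x := by
  refine exists_equiv_le_of_orderEmbOfFin_le rfl (card_sdiff_comm hST).symm ?_
  rw [orderEmbOfFin_le_iff_card_filter_lt]
  exact fun t => (card_filter_sdiff_le_iff S T _).2 (h t)

theorem card_filter_lt_image_le {ι : Type*} {s : Finset ι} {u v : ι → β} (hu : Set.InjOn u s)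
    (huv : ∀ i ∈ s, u i ≤ v i) (t : β) :
    #{y ∈ s.image v | y < t} ≤ #{y ∈ s.image u | y < t} := by
  rw [filter_image, filter_image, card_image_of_injOn (hu.mono (filter_subset _ _))]
  exact card_image_le.trans
    (card_le_card (monotone_filter_right s fun i hi hvi => (huv i hi).trans_lt hvi))

end Finset

theorem exists_equiv_castLE_le_of_equiv_sdiff {n j : ℕ} (hj : j ≤ n) (w : Equiv.Perm (Fin n))
    {A S T : Finset (Fin n)} (hA : #A = j)
    (hS : S = univ.image fun e : Fin j => w (Fin.castLE hj e)) (hT : T = A.image w)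
    (σ : ↥(S \ T) ≃ ↥(T \ S)) (hσ : ∀ y : ↥(S \ T), (y : Fin n) ≤ σ y) :
    ∃ f : Fin j ≃ A, ∀ d, Fin.castLE hj d ≤ f d ∧ w (Fin.castLE hj d) ≤ w (f d) := by
  have memS (x : Fin n) : w x ∈ S ↔ (x : ℕ) < j := by
    simp only [hS, mem_image, mem_univ, true_and, EmbeddingLike.apply_eq_iff_eq]
    exact ⟨fun ⟨e, he⟩ => he ▸ e.isLt, fun hx => ⟨⟨x, hx⟩, rfl⟩⟩
  have memT (x : Fin n) : w x ∈ T ↔ x ∈ A := by simp [hT]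
  let g (e : Fin j) : Fin n :=
    if h : Fin.castLE hj e ∈ A then Fin.castLE hj e
    else w.symm (σ ⟨w (Fin.castLE hj e), mem_sdiff.2 ⟨(memS _).2 e.isLt, mt (memT _).1 h⟩⟩)
  have g_of_mem {e} (h : Fin.castLE hj e ∈ A) : g e = Fin.castLE hj e := dif_pos h
  have g_of_notMem {e} (h : Fin.castLE hj e ∉ A) :
      g e ∈ A ∧ j ≤ (g e : ℕ) ∧ w (Fin.castLE hj e) ≤ w (g e) := by
    set y := σ ⟨w (Fin.castLE hj e), mem_sdiff.2 ⟨(memS _).2 e.isLt, mt (memT _).1 h⟩⟩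
    have hy : w (g e) = y := by simp [g, h, y]
    obtain ⟨hyT, hyS⟩ := mem_sdiff.1 y.2
    rw [← hy, memT] at hyT
    rw [← hy, memS, not_lt] at hyS
    exact ⟨hyT, hyS, (hσ _).trans_eq hy.symm⟩
  have g_mem (e) : g e ∈ A := by
    by_cases h : Fin.castLE hj e ∈ A
    · exact g_of_mem h ▸ h
    · exact (g_of_notMem h).1
  have g_injective : Injective g := by
    intro e₁ e₂ he
    by_cases h₁ : Fin.castLE hj e₁ ∈ A <;> by_cases h₂ : Fin.castLE hj e₂ ∈ A
    · rw [g_of_mem h₁, g_of_mem h₂] at he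
      exact Fin.castLE_injective hj he
    · exact absurd (g_of_notMem h₂).2.1 (by rw [← he, g_of_mem h₁]; exact e₁.isLt.not_ge)
    · exact absurd (g_of_notMem h₁).2.1 (by rw [he, g_of_mem h₂]; exact e₂.isLt.not_ge)
    · simp only [g, dif_neg h₁, dif_neg h₂] at he
      have := congrArg Subtype.val (σ.injective (Subtype.ext (w.symm.injective he)))
      exact Fin.castLE_injective hj (w.injective this)
  have g_bijective : Bijective fun e => (⟨g e, g_mem e⟩ : A) :=
    (Fintype.bijective_iff_injective_and_card _).2
      ⟨fun e₁ e₂ he => g_injective (congrArg Subtype.val he), by simp [hA]⟩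
  refine ⟨Equiv.ofBijective _ g_bijective, fun d => ?_⟩
  change Fin.castLE hj d ≤ g d ∧ w (Fin.castLE hj d) ≤ w (g d)
  by_cases h : Fin.castLE hj d ∈ A
  · exact g_of_mem h ▸ ⟨le_rfl, le_rfl⟩
  · obtain ⟨-, hj', hw⟩ := g_of_notMem h
    exact ⟨Fin.le_def.2 (by rw [Fin.val_castLE]; omega), hw⟩

/-- For the full-flag Hessenberg function h ≡ n, a subset {i_1 < ⋯ < i_j} (given
as a Finset `A` of cardinality `j`) is reachable from [j] = {1,…,j} in `G_{w,h}`
(edge x → y iff x < y and w(x) < w(y)) iff the increasing rearrangement of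
{w(a) : a ∈ A} dominates the increasing rearrangement of {w(1),…,w(j)}
componentwise. -/
theorem stmt7 (n j : ℕ) (hj : j ≤ n) (w : Equiv.Perm (Fin n))
    (A : Finset (Fin n)) (hA : A.card = j) :
    (∃ f : Fin j ≃ {x // x ∈ A},
        ∀ d : Fin j, Relation.ReflTransGen (fun x y : Fin n => x < y ∧ w x < w y)
          (Fin.castLE hj d) ((f d : {x // x ∈ A}) : Fin n))
      ↔ ∀ d : Fin j,
          (((Finset.univ : Finset (Fin j)).image (fun e : Fin j => w (Fin.castLE hj e))).orderIsoOfFin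
              (by rw [Finset.card_image_of_injective _
                    (fun a b hab => Fin.castLE_injective hj (w.injective hab))]
                  simp) d : Fin n)
            ≤ ((A.image (fun x => w x)).orderIsoOfFin
              (by rw [Finset.card_image_of_injective _ w.injective]; exact hA) d : Fin n) := by
  have hu : Injective fun e : Fin j => w (Fin.castLE hj e) :=
    w.injective.comp (Fin.castLE_injective hj)
  simp only [Relation.reflTransGen_lt_and_lt_iff w.injective, coe_orderIsoOfFin_apply]
  rw [orderEmbOfFin_le_iff_card_filter_lt]
  constructor
  · rintro ⟨f, hf⟩ t
    have hT : A.image (fun x => w x) = univ.image fun e => w (f e) := by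
      ext y
      simp [f.exists_congr_left]
    rw [hT]
    exact card_filter_lt_image_le hu.injOn (fun d _ => (hf d).2) t
  · intro h
    obtain ⟨σ, hσ⟩ := exists_equiv_sdiff_le_of_card_filter_lt
      (by rw [card_image_of_injective _ hu, card_image_of_injective _ w.injective, hA, card_fin]) h
    exact exists_equiv_castLE_le_of_equiv_sdiff hj w hA rfl rfl σ hσ
end

section
/- Let G_k denote the set of permutations w ∈ S_n with exactly k descents such that, writing D(w) = {d_1 < ⋯ < d_k} and J_s = {w(d_{s-1}+1),...,w(d_s)} (with d_0=0, d_{k+1}=n), the longest element w_0 (given by w_0(i) = n+1-i) lies in the coset (S_{J_1} × ⋯ × S_{J_{k+1}})·w. Then the map sending a composition a = (a_1,...,a_{k+1}) of n to the permutation w(a) whose one-line notation is the concatenation of the increasing runs (n-d_1+1,...,n), (n-d_2+1,...,n-d_1), ..., (1,...,n-d_k) — where d_s = a_1 + ⋯ + a_s — is a bijection from (k+1)-part compositions of n to G_k. In particular |G_k| = C(n-1, k). -/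
/-- The descent pairs of `w`: pairs of adjacent positions (p, p+1) with w(p) > w(p+1). -/
def desPairs {n : ℕ} (w : Equiv.Perm (Fin n)) : Finset (Fin n × Fin n) :=
  Finset.univ.filter (fun p : Fin n × Fin n => (p.1 : ℕ) + 1 = (p.2 : ℕ) ∧ w p.2 < w p.1)

/-- The number of descents of `w`. -/
def desCount {n : ℕ} (w : Equiv.Perm (Fin n)) : ℕ := (desPairs w).card

/-- The index of the descent block of `w` containing position `p`. -/
def blockIdx {n : ℕ} (w : Equiv.Perm (Fin n)) (p : Fin n) : ℕ :=
  ((desPairs w).filter (fun q => q.1 < p)).card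

/-- `v` lies in the Young subgroup S_{J_1} × ⋯ × S_{J_{k+1}} of the descent
blocks of `w`. -/
def isYoung {n : ℕ} (w v : Equiv.Perm (Fin n)) : Prop :=
  ∀ y : Fin n, blockIdx w (w⁻¹ (v y)) = blockIdx w (w⁻¹ y)

/-- `w ∈ G_k`: `w` has `k` descents and the longest element `w₀` (with
w₀(i) = n+1-i, i.e. 0-indexed (w₀ x) + x + 1 = n) lies in the coset
(S_{J_1} × ⋯ × S_{J_{k+1}})·w. -/
def GkMem (n k : ℕ) (w : Equiv.Perm (Fin n)) : Prop :=
  desCount w = k ∧ ∃ v : Equiv.Perm (Fin n), isYoung w v ∧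
    ∀ x : Fin n, (((v * w) x : ℕ) + (x : ℕ) + 1 = n)

/-- The smallest cut point of `D ∪ {n}` strictly above position `p`. -/
noncomputable def upcut (n : ℕ) (D : Finset ℕ) (p : ℕ) : ℕ :=
  sInf {d : ℕ | (d ∈ D ∨ d = n) ∧ p < d}

/-- The largest cut point of `D ∪ {0}` at most `p`. -/
noncomputable def downcut (D : Finset ℕ) (p : ℕ) : ℕ :=
  sSup {d : ℕ | (d ∈ D ∨ d = 0) ∧ d ≤ p}

/-- `w` is the permutation `w(a)` associated to the composition `a` of `n` with
cut set `D`: its one-line notation is the concatenation of the increasing runs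
(n-d_1+1,…,n), (n-d_2+1,…,n-d_1), …, (1,…,n-d_k); equivalently (0-indexed)
w(p) + d_{s+1} + d_s = n + p where d_s ≤ p < d_{s+1} are the adjacent cuts. -/
noncomputable def isWa (n : ℕ) (D : Finset ℕ) (w : Equiv.Perm (Fin n)) : Prop :=
  ∀ p : Fin n, (w p : ℕ) + upcut n D (p : ℕ) + downcut D (p : ℕ) = n + (p : ℕ)


/-!
The block of a position `p` is the interval `[downcut D p, upcut n D p)` between adjacent cuts,
and `w(a)` sends it increasingly onto its mirror image `[n - upcut, n - downcut)`. Conversely,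
for `w ∈ G_k` the coset condition forces `v = w₀ w⁻¹`, and `v` preserving the blocks of `w` says
exactly that `w₀ (w x)` lies in the block of `x`, i.e. that `w` maps every block into its mirror
image; since `w` has no descent inside a block, this pins `w` down as `w(a)` for `D = Des(w)`.
-/

open Finset

section Cuts

variable {n : ℕ} {D : Finset ℕ} {d p q : ℕ}

lemma downcut_le (D : Finset ℕ) (p : ℕ) : downcut D p ≤ p :=
  csSup_le ⟨0, Or.inr rfl, p.zero_le⟩ fun _ hd => hd.2

lemma downcut_mem (D : Finset ℕ) (p : ℕ) : downcut D p ∈ D ∨ downcut D p = 0 :=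
  (Nat.sSup_mem (s := {d | (d ∈ D ∨ d = 0) ∧ d ≤ p}) ⟨0, Or.inr rfl, p.zero_le⟩
    ⟨p, fun _ hd => hd.2⟩).1

lemma le_downcut (hd : d ∈ D ∨ d = 0) (hdp : d ≤ p) : d ≤ downcut D p :=
  le_csSup ⟨p, fun _ hd => hd.2⟩ ⟨hd, hdp⟩

lemma le_downcut_iff (hd : d ∈ D) : d ≤ downcut D p ↔ d ≤ p :=
  ⟨fun h => h.trans (downcut_le D p), le_downcut (Or.inl hd)⟩

lemma upcut_spec (D : Finset ℕ) (hp : p < n) :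
    (upcut n D p ∈ D ∨ upcut n D p = n) ∧ p < upcut n D p :=
  Nat.sInf_mem (s := {d | (d ∈ D ∨ d = n) ∧ p < d}) ⟨n, Or.inr rfl, hp⟩

lemma lt_upcut (D : Finset ℕ) (hp : p < n) : p < upcut n D p :=
  (upcut_spec D hp).2

lemma upcut_le (hd : d ∈ D ∨ d = n) (hpd : p < d) : upcut n D p ≤ d :=
  Nat.sInf_le ⟨hd, hpd⟩

lemma upcut_le_self (D : Finset ℕ) (hp : p < n) : upcut n D p ≤ n :=
  upcut_le (Or.inr rfl) hp

lemma upcut_downcut (hp : p < n) : upcut n D (downcut D p) = upcut n D p := by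
  have hdp := downcut_le D p
  have hpu := lt_upcut D hp
  refine le_antisymm (upcut_le (upcut_spec D hp).1 (by omega)) (upcut_le ?_ ?_)
  · exact (upcut_spec D (by omega)).1
  · by_contra! hle
    obtain ⟨hD | hn, hlt⟩ := upcut_spec (n := n) D (show downcut D p < n by omega)
    · have := le_downcut (Or.inl hD) hle
      omega
    · omega

lemma downcut_eq_iff (hp : p < n) (hq : q < n) :
    downcut D q = downcut D p ↔ downcut D p ≤ q ∧ q < upcut n D p := by
  have hdp := downcut_le D p
  have hdq := downcut_le D q
  have hpu := lt_upcut D hp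
  constructor
  · intro h
    refine ⟨h ▸ hdq, ?_⟩
    by_contra! huq
    rcases (upcut_spec D hp).1 with hD | hn
    · have := le_downcut (Or.inl hD) huq
      omega
    · omega
  · rintro ⟨hpq, hqu⟩
    refine le_antisymm ?_ (le_downcut (downcut_mem D p) hpq)
    rcases downcut_mem D q with hD | h0
    · refine le_downcut (Or.inl hD) ?_
      by_contra! hlt
      have := upcut_le (n := n) (Or.inl hD) hlt
      omega
    · omega

lemma upcut_eq_of_downcut_eq (hp : p < n) (hq : q < n) (h : downcut D q = downcut D p) :
    upcut n D q = upcut n D p := by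
  rw [← upcut_downcut hq, h, upcut_downcut hp]

lemma downcut_eq_sup (D : Finset ℕ) (p : ℕ) : downcut D p = (D.filter (· ≤ p)).sup id := by
  refine le_antisymm ?_ (Finset.sup_le ?_)
  · rcases downcut_mem D p with hD | h0
    · exact Finset.le_sup (f := id) (mem_filter.2 ⟨hD, downcut_le D p⟩)
    · exact h0 ▸ Nat.zero_le _
  · intro d hd
    exact le_downcut (Or.inl (mem_filter.1 hd).1) (mem_filter.1 hd).2

lemma card_filter_le_eq_iff :
    #(D.filter (· ≤ p)) = #(D.filter (· ≤ q)) ↔ downcut D p = downcut D q := by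
  constructor
  · intro h
    wlog hpq : p ≤ q generalizing p q
    · exact (this h.symm (by omega)).symm
    have hsub : D.filter (· ≤ p) ⊆ D.filter (· ≤ q) :=
      fun d hd => by
        rw [mem_filter] at hd ⊢
        exact ⟨hd.1, hd.2.trans hpq⟩
    rw [downcut_eq_sup, downcut_eq_sup, eq_of_subset_of_card_le hsub h.ge]
  · intro h
    have key (r : ℕ) : D.filter (· ≤ r) = D.filter (· ≤ downcut D r) :=
      filter_congr fun _ hd => (le_downcut_iff hd).symm
    rw [key p, key q, h]

lemma add_sub_le_of_ascents {f : Fin n → ℕ}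
    (hasc : ∀ p q : Fin n, (p : ℕ) + 1 = q → (q : ℕ) ∉ D → f p < f q)
    (p q : Fin n) (hpq : p ≤ q) (hq : (q : ℕ) < upcut n D p) : f p + (q - p) ≤ f q := by
  obtain ⟨m, hm⟩ := Nat.exists_eq_add_of_le (Fin.le_def.1 hpq)
  induction m generalizing q with
  | zero => rw [Fin.ext (hm.trans (add_zero _))]; omega
  | succ m ih =>
    let q' : Fin n := ⟨p + m, by omega⟩
    have hq'v : (q' : ℕ) = p + m := rfl
    have hq' := ih q' (Fin.le_def.2 (Nat.le_add_right _ _)) (by omega) rfl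
    have hqD : (q : ℕ) ∉ D := fun hD => by
      have := upcut_le (n := n) (Or.inl hD) (show (p : ℕ) < q by omega)
      omega
    have := hasc q' q (by omega) hqD
    omega

end Cuts

section CutFormula

variable {n : ℕ} {D : Finset ℕ} {f : Fin n → Fin n}

lemma downcut_rev_apply_eq
    (hf : ∀ p : Fin n, (f p : ℕ) + upcut n D p + downcut D p = n + p) (x : Fin n) :
    downcut D (f x).rev = downcut D x := by
  have := hf x
  have := lt_upcut D x.isLt
  have := downcut_le D x
  rw [downcut_eq_iff x.isLt (f x).rev.isLt, Fin.val_rev]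
  omega

lemma injective_of_forall_add_upcut_add_downcut
    (hf : ∀ p : Fin n, (f p : ℕ) + upcut n D p + downcut D p = n + p) : Function.Injective f := by
  intro p q hpq
  have hd : downcut D q = downcut D p := by
    rw [← downcut_rev_apply_eq hf p, ← downcut_rev_apply_eq hf q, hpq]
  have hu := upcut_eq_of_downcut_eq p.isLt q.isLt hd
  have hp := hf p
  have hq := hf q
  rw [hpq] at hp
  ext
  omega

noncomputable def waFun (n : ℕ) (D : Finset ℕ) (p : Fin n) : Fin n :=
  ⟨n + p - upcut n D p - downcut D p, by have := lt_upcut D p.isLt; omega⟩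

lemma waFun_add_upcut_add_downcut (p : Fin n) :
    (waFun n D p : ℕ) + upcut n D p + downcut D p = n + p := by
  have := downcut_le D p
  have := lt_upcut D p.isLt
  have := upcut_le_self D p.isLt
  simp only [waFun]
  omega

end CutFormula

noncomputable def waPerm (n : ℕ) (D : Finset ℕ) : Equiv.Perm (Fin n) :=
  Equiv.ofBijective (waFun n D) <| Finite.injective_iff_bijective.mp <|
    injective_of_forall_add_upcut_add_downcut waFun_add_upcut_add_downcut

lemma isWa_waPerm (n : ℕ) (D : Finset ℕ) : isWa n D (waPerm n D) :=
  waFun_add_upcut_add_downcut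

section Descents

variable {n : ℕ} {D : Finset ℕ} {w : Equiv.Perm (Fin n)}

lemma isWa.unique {w' : Equiv.Perm (Fin n)} (hw : isWa n D w) (hw' : isWa n D w') : w = w' := by
  ext p
  have := hw p
  have := hw' p
  omega

lemma isWa.apply_lt_of_mem (hw : isWa n D w) {p q : Fin n} (hpq : (p : ℕ) + 1 = q)
    (hq : (q : ℕ) ∈ D) : w q < w p := by
  have hdq : downcut D q = q := le_antisymm (downcut_le D q) (le_downcut (Or.inl hq) le_rfl)
  have := upcut_le (n := n) (Or.inl hq) (show (p : ℕ) < q by omega)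
  have := lt_upcut D q.isLt
  have := downcut_le D p
  have := hw p
  have := hw q
  rw [Fin.lt_def]
  omega

lemma isWa.apply_lt_of_notMem (hw : isWa n D w) {p q : Fin n} (hpq : (p : ℕ) + 1 = q)
    (hq : (q : ℕ) ∉ D) : w p < w q := by
  have hpu := lt_upcut D p.isLt
  have hqu : (q : ℕ) < upcut n D p := by
    rcases (upcut_spec D p.isLt).1 with hD | hn
    · have : upcut n D p ≠ q := fun h => hq (h ▸ hD)
      omega
    · omega
  have hd := (downcut_eq_iff p.isLt q.isLt).2 ⟨(downcut_le D p).trans (by omega), hqu⟩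
  have := upcut_eq_of_downcut_eq p.isLt q.isLt hd
  have := hw p
  have := hw q
  rw [Fin.lt_def]
  omega

/-- A descent at `(p, p + 1)` is recorded as the cut `p + 1`, as in `upcut` and `downcut`. -/
def desSet (w : Equiv.Perm (Fin n)) : Finset ℕ :=
  (desPairs w).image fun q => (q.2 : ℕ)

lemma mem_desSet {d : ℕ} :
    d ∈ desSet w ↔ ∃ p q : Fin n, (p : ℕ) + 1 = q ∧ w q < w p ∧ (q : ℕ) = d := by
  simp [desSet, desPairs, and_assoc]

lemma desPairs_injOn_snd : Set.InjOn (fun q : Fin n × Fin n => (q.2 : ℕ)) (desPairs w) := by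
  intro a ha b hb hab
  simp only [desPairs, coe_filter, mem_univ, true_and, Set.mem_ofPred_eq] at ha hb hab
  ext <;> omega

lemma card_desSet : #(desSet w) = desCount w :=
  card_image_of_injOn desPairs_injOn_snd

lemma desSet_subset : desSet w ⊆ Icc 1 (n - 1) := by
  intro d hd
  obtain ⟨p, q, hpq, -, rfl⟩ := mem_desSet.1 hd
  have := q.isLt
  simp only [mem_Icc]
  omega

lemma blockIdx_eq_card (p : Fin n) : blockIdx w p = #((desSet w).filter (· ≤ (p : ℕ))) := by
  rw [blockIdx, desSet, filter_image,
    card_image_of_injOn (desPairs_injOn_snd.mono (filter_subset _ _))]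
  congr 1
  refine filter_congr fun q hq => ?_
  simp only [desPairs, mem_filter, mem_univ, true_and] at hq
  simp only [Fin.lt_def]
  omega

lemma blockIdx_eq_blockIdx_iff {p q : Fin n} :
    blockIdx w p = blockIdx w q ↔ downcut (desSet w) p = downcut (desSet w) q := by
  rw [blockIdx_eq_card, blockIdx_eq_card, card_filter_le_eq_iff]

lemma lt_apply_of_notMem_desSet {p q : Fin n} (hpq : (p : ℕ) + 1 = q)
    (hq : (q : ℕ) ∉ desSet w) : w p < w q := by
  refine lt_of_le_of_ne (not_lt.1 fun hlt => hq (mem_desSet.2 ⟨p, q, hpq, hlt, rfl⟩)) ?_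
  intro h
  have := congrArg Fin.val (w.injective h)
  omega

lemma isWa.desSet_eq (hD : D ⊆ Icc 1 (n - 1)) (hw : isWa n D w) : desSet w = D := by
  ext d
  rw [mem_desSet]
  constructor
  · rintro ⟨p, q, hpq, hlt, rfl⟩
    by_contra hq
    exact (hw.apply_lt_of_notMem hpq hq).asymm hlt
  · intro hd
    have := mem_Icc.1 (hD hd)
    exact ⟨⟨d - 1, by omega⟩, ⟨d, by omega⟩, by simp; omega,
      hw.apply_lt_of_mem (by simp; omega) hd, rfl⟩

lemma isWa_iff (hD : D ⊆ Icc 1 (n - 1)) :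
    isWa n D w ↔ desSet w = D ∧ ∀ x : Fin n, downcut D (w x).rev = downcut D x := by
  refine ⟨fun hw => ⟨hw.desSet_eq hD, downcut_rev_apply_eq hw⟩, ?_⟩
  rintro ⟨hdes, hrev⟩ x
  -- `w` maps each block into its mirror image ...
  have hmirror (y : Fin n) : n ≤ w y + upcut n D y ∧ downcut D y + w y + 1 ≤ n := by
    have := (downcut_eq_iff y.isLt (w y).rev.isLt).1 (hrev y)
    rw [Fin.val_rev] at this
    omega
  -- ... and increasingly, so the first and last entries of the block of `x` squeeze `w x`.
  have hasc (p q : Fin n) (hpq : (p : ℕ) + 1 = q) (hq : (q : ℕ) ∉ D) : (w p : ℕ) < w q :=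
    lt_apply_of_notMem_desSet hpq (hdes ▸ hq)
  have hxu := lt_upcut D x.isLt
  have hdx := downcut_le D x
  have hun := upcut_le_self D x.isLt
  let a : Fin n := ⟨downcut D x, by omega⟩
  let b : Fin n := ⟨upcut n D x - 1, by omega⟩
  have ha : (a : ℕ) = downcut D x := rfl
  have hb : (b : ℕ) = upcut n D x - 1 := rfl
  have hda := (downcut_eq_iff (D := D) x.isLt a.isLt).2 ⟨ha.ge, by omega⟩
  have hdb := (downcut_eq_iff (D := D) x.isLt b.isLt).2 ⟨by omega, by omega⟩
  have hua := upcut_eq_of_downcut_eq x.isLt a.isLt hda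
  have hub := upcut_eq_of_downcut_eq x.isLt b.isLt hdb
  have hax := add_sub_le_of_ascents hasc a x (Fin.le_def.2 (by omega)) (by omega)
  have hxb := add_sub_le_of_ascents hasc x b (Fin.le_def.2 (by omega)) (by omega)
  have := hmirror a
  have := hmirror b
  omega

end Descents

section Young

variable {n k : ℕ} {w : Equiv.Perm (Fin n)}

lemma forall_add_add_one_eq_iff (σ : Equiv.Perm (Fin n)) :
    (∀ x : Fin n, (σ x : ℕ) + x + 1 = n) ↔ σ = Fin.revPerm := by
  simp only [Equiv.ext_iff, Fin.ext_iff, Fin.revPerm_apply, Fin.val_rev]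
  exact forall_congr' fun x => by omega

lemma isYoung_revPerm_mul_inv_iff :
    isYoung w (Fin.revPerm * w⁻¹) ↔ ∀ x : Fin n, blockIdx w (w x).rev = blockIdx w x := by
  simp only [isYoung, Equiv.Perm.mul_apply, Fin.revPerm_apply]
  constructor
  · intro h x
    simpa using (h (w (w x).rev)).symm
  · intro h y
    simpa using (h (w⁻¹ (w⁻¹ y).rev)).symm

lemma gkMem_iff : GkMem n k w ↔
    desCount w = k ∧ ∀ x : Fin n, downcut (desSet w) (w x).rev = downcut (desSet w) x := by
  simp only [GkMem, forall_add_add_one_eq_iff, ← eq_mul_inv_iff_mul_eq, exists_eq_right,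
    isYoung_revPerm_mul_inv_iff, blockIdx_eq_blockIdx_iff]

lemma gkMem_iff_isWa : GkMem n k w ↔ #(desSet w) = k ∧ isWa n (desSet w) w := by
  rw [gkMem_iff, isWa_iff desSet_subset, card_desSet]
  simp

end Young

noncomputable def waEquiv (n k : ℕ) :
    {D : Finset ℕ // D ∈ powersetCard k (Icc 1 (n - 1))} ≃ {w : Equiv.Perm (Fin n) // GkMem n k w}
    where
  toFun D := ⟨waPerm n D, by
    obtain ⟨hD, hk⟩ := mem_powersetCard.1 D.2
    rw [gkMem_iff_isWa, (isWa_waPerm n D).desSet_eq hD]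
    exact ⟨hk, isWa_waPerm n D⟩⟩
  invFun w := ⟨desSet w.1, mem_powersetCard.2 ⟨desSet_subset, (gkMem_iff_isWa.1 w.2).1⟩⟩
  left_inv D := Subtype.ext ((isWa_waPerm n D).desSet_eq (mem_powersetCard.1 D.2).1)
  right_inv w := Subtype.ext ((isWa_waPerm n (desSet w.1)).unique (gkMem_iff_isWa.1 w.2).2)

theorem stmt12_general (n k : ℕ) :
    (∃ e : {D : Finset ℕ // D ∈ Finset.powersetCard k (Finset.Icc 1 (n - 1))} ≃
          {w : Equiv.Perm (Fin n) // GkMem n k w},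
        ∀ D, isWa n D.1 (e D).1)
    ∧ Nat.card {w : Equiv.Perm (Fin n) // GkMem n k w} = Nat.choose (n - 1) k := by
  refine ⟨⟨waEquiv n k, fun D => isWa_waPerm n D.1⟩, ?_⟩
  rw [← Nat.card_congr (waEquiv n k), Nat.card_eq_fintype_card, Fintype.card_coe,
    card_powersetCard, Nat.card_Icc, Nat.add_sub_cancel]

/-- The map a ↦ w(a) is a bijection from (k+1)-part compositions of n
(equivalently, k-element subsets of [n-1]) onto G_k; in particular
|G_k| = C(n-1, k). -/
theorem stmt12 (n k : ℕ) (hn : 1 ≤ n) :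
    (∃ e : {D : Finset ℕ // D ∈ Finset.powersetCard k (Finset.Icc 1 (n - 1))} ≃
          {w : Equiv.Perm (Fin n) // GkMem n k w},
        ∀ D, isWa n D.1 (e D).1)
    ∧ Nat.card {w : Equiv.Perm (Fin n) // GkMem n k w} = Nat.choose (n - 1) k :=
  stmt12_general n k
end

section
/- A permutation w ∈ S_n satisfies: the longest element w_0 is contained in (S_{J_1} × ⋯ × S_{J_{k+1}})·w (where J_s are the descent blocks of w as above) if and only if each descent block of w in one-line notation is an increasing run of consecutive integers and the blocks are in decreasing order of their value ranges; equivalently, w = w(a) for the composition a of n with S(a) = D(w) (as defined via d_s = Σ_{i≤s} a_i and concatenating (n-d_1+1,...,n), (n-d_2+1,...,n-d_1), ..., (1,...,n-d_k)). -/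
/-- The cut set D(w) ⊆ [n-1] of `w`: the (1-indexed) positions of descents. -/
def descCuts {n : ℕ} (w : Equiv.Perm (Fin n)) : Finset ℕ :=
  (desPairs w).image (fun p => (p.2 : ℕ))

/-!
`w₀ ∈ (S_{J_1} × ⋯ × S_{J_{k+1}}) w` says that `w₀ w⁻¹` preserves every block, i.e. that for each
position `p` the position `w⁻¹(w₀ p)` lies in the block `[d, U)` of `p`. Applied to all `p`, this
says that `w` maps the block `[d, U)` into the mirror interval `[n - U, n - d)` of values, of the
same size; as `w` increases along a block, `w p = n - U + (p - d)` there, which is `w = w(a)`.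
Conversely, for `w = w(a)` the position `w⁻¹(w₀ p)` is the reflection `U + d - 1 - p` of `p`
inside its block.
-/

namespace DescentBlocks

variable {n : ℕ}

section Cuts

variable {D : Finset ℕ} {p q : ℕ}

lemma card_filter_le_eq_card_filter_le_iff (D : Finset ℕ) (p q : ℕ) :
    (D.filter (· ≤ p)).card = (D.filter (· ≤ q)).card ↔ ∀ c ∈ D, c ≤ p ↔ c ≤ q := by
  rw [← Finset.filter_inj']
  wlog hpq : p ≤ q generalizing p q
  · rw [eq_comm, this q p (le_of_not_ge hpq), eq_comm]
  have hsub : D.filter (· ≤ p) ⊆ D.filter (· ≤ q) :=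
    Finset.monotone_filter_right _ fun _ _ hc => hc.trans hpq
  exact ⟨fun h => Finset.eq_of_subset_of_card_le hsub h.ge, fun h => h ▸ rfl⟩

lemma downcut_spec : (downcut D p ∈ D ∨ downcut D p = 0) ∧ downcut D p ≤ p :=
  Nat.sSup_mem (s := {d | (d ∈ D ∨ d = 0) ∧ d ≤ p}) ⟨0, Or.inr rfl, p.zero_le⟩
    ⟨p, fun _ hd => hd.2⟩

lemma le_downcut {c : ℕ} (hc : c ∈ D) (hcp : c ≤ p) : c ≤ downcut D p :=
  le_csSup (s := {d | (d ∈ D ∨ d = 0) ∧ d ≤ p}) ⟨p, fun _ hd => hd.2⟩ ⟨Or.inl hc, hcp⟩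

lemma upcut_spec (hp : p < n) : (upcut n D p ∈ D ∨ upcut n D p = n) ∧ p < upcut n D p :=
  Nat.sInf_mem (s := {d | (d ∈ D ∨ d = n) ∧ p < d}) ⟨n, Or.inr rfl, hp⟩

lemma upcut_le {c : ℕ} (hc : c ∈ D ∨ c = n) (hpc : p < c) : upcut n D p ≤ c :=
  Nat.sInf_le (s := {d | (d ∈ D ∨ d = n) ∧ p < d}) ⟨hc, hpc⟩

lemma forall_le_iff_le_iff_downcut_le_and_lt_upcut (hp : p < n) (hq : q < n) :
    (∀ c ∈ D, c ≤ p ↔ c ≤ q) ↔ downcut D p ≤ q ∧ q < upcut n D p := by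
  constructor
  · intro h
    refine ⟨?_, ?_⟩
    · rcases downcut_spec (D := D) (p := p) with ⟨hmem | hzero, hle⟩
      · exact (h _ hmem).1 hle
      · omega
    · by_contra! hle
      rcases upcut_spec (D := D) hp with ⟨hmem | hn, hlt⟩
      · exact absurd ((h _ hmem).2 hle) hlt.not_ge
      · omega
  · rintro ⟨hdq, hqu⟩ c hc
    constructor
    · exact fun hcp => (le_downcut hc hcp).trans hdq
    · intro hcq
      by_contra! hpc
      exact (upcut_le (Or.inl hc) hpc).not_gt (hcq.trans_lt hqu)

lemma downcut_congr (h : ∀ c ∈ D, c ≤ p ↔ c ≤ q) : downcut D p = downcut D q := by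
  unfold downcut
  congr 1
  ext c
  simp only [Set.mem_ofPred_eq]
  rcases eq_or_ne c 0 with rfl | hc
  · simp
  · simp only [hc, or_false]
    exact and_congr_right (h c)

lemma upcut_congr (hp : p < n) (hq : q < n) (h : ∀ c ∈ D, c ≤ p ↔ c ≤ q) :
    upcut n D p = upcut n D q := by
  unfold upcut
  congr 1
  ext c
  simp only [Set.mem_ofPred_eq]
  rcases eq_or_ne c n with rfl | hc
  · simp [hp, hq]
  · simp only [hc, or_false]
    exact and_congr_right fun hcD => not_iff_not.mp (by simpa only [not_lt] using h c hcD)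

end Cuts

section Descents

variable {w : Equiv.Perm (Fin n)}

lemma mem_desPairs {t : Fin n × Fin n} :
    t ∈ desPairs w ↔ (t.1 : ℕ) + 1 = t.2 ∧ w t.2 < w t.1 := by
  simp [desPairs]

lemma blockIdx_eq_card_filter (w : Equiv.Perm (Fin n)) (p : Fin n) :
    blockIdx w p = ((descCuts w).filter (· ≤ (p : ℕ))).card := by
  unfold blockIdx descCuts
  rw [Finset.filter_image, Finset.card_image_of_injOn]
  · refine congrArg _ (Finset.filter_congr fun t ht => ?_)
    have := (mem_desPairs.1 ht).1
    simp only [Fin.lt_def]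
    omega
  · rintro s hs t ht hst
    have hs' := (mem_desPairs.1 (Finset.mem_filter.1 hs).1).1
    have ht' := (mem_desPairs.1 (Finset.mem_filter.1 ht).1).1
    have h2 : s.2 = t.2 := Fin.ext hst
    exact Prod.ext (Fin.ext (by omega)) h2

lemma blockIdx_eq_blockIdx_iff {p q : Fin n} :
    blockIdx w p = blockIdx w q ↔ ∀ c ∈ descCuts w, c ≤ (p : ℕ) ↔ c ≤ (q : ℕ) := by
  rw [blockIdx_eq_card_filter, blockIdx_eq_card_filter, card_filter_le_eq_card_filter_le_iff]

/-- `a` and `b` lie in one descent block, along which `w` increases strictly. -/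
lemma val_add_le_of_forall_le_iff {a b : Fin n} (hab : a ≤ b)
    (h : ∀ c ∈ descCuts w, c ≤ (a : ℕ) ↔ c ≤ (b : ℕ)) : (w a : ℕ) + (b - a) ≤ w b := by
  obtain ⟨b, hb⟩ := b
  simp only [Fin.le_def] at hab h ⊢
  induction b, hab using Nat.le_induction with
  | base => simp
  | succ m hm ih =>
    have hm' : m < n := by omega
    have hstep : ¬ w ⟨m + 1, hb⟩ < w ⟨m, hm'⟩ := fun hlt =>
      absurd ((h (m + 1) (Finset.mem_image.2 ⟨(⟨m, hm'⟩, ⟨m + 1, hb⟩),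
        mem_desPairs.2 ⟨rfl, hlt⟩, rfl⟩)).2 le_rfl) (by omega)
    have hne : (w ⟨m, hm'⟩ : ℕ) ≠ w ⟨m + 1, hb⟩ := fun heq =>
      absurd (congrArg Fin.val (w.injective (Fin.ext heq))) (by simp)
    have := ih hm' fun c hc =>
      ⟨fun hca => hca.trans hm, fun hcm => (h c hc).2 (hcm.trans m.le_succ)⟩
    rw [Fin.lt_def] at hstep
    omega

end Descents

section Reversal

variable {w : Equiv.Perm (Fin n)}

lemma isWa_of_forall_blockIdx_inv_rev
    (hw : ∀ p : Fin n, blockIdx w (w⁻¹ p.rev) = blockIdx w p) : isWa n (descCuts w) w := by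
  intro x
  set D := descCuts w
  set d := downcut D x
  set U := upcut n D x
  have hdx : d ≤ x := downcut_spec.2
  have hxU : x < U := (upcut_spec x.isLt).2
  have hUn : U ≤ n := upcut_le (Or.inr rfl) x.isLt
  have hblock (q : Fin n) : (∀ c ∈ D, c ≤ (x : ℕ) ↔ c ≤ (q : ℕ)) ↔ d ≤ q ∧ q < U :=
    forall_le_iff_le_iff_downcut_le_and_lt_upcut x.isLt q.isLt
  have hsame {a b : Fin n} (ha : d ≤ a ∧ a < U) (hb : d ≤ b ∧ b < U) :
      ∀ c ∈ D, c ≤ (a : ℕ) ↔ c ≤ (b : ℕ) := fun c hc =>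
    ((hblock a).2 ha c hc).symm.trans ((hblock b).2 hb c hc)
  have hmirror (b : Fin n) (hb : d ≤ b ∧ b < U) : n - U ≤ w b ∧ (w b : ℕ) + d + 1 ≤ n := by
    have hrev := hw (w b).rev
    rw [Fin.rev_rev, Equiv.Perm.inv_def, Equiv.symm_apply_apply, blockIdx_eq_blockIdx_iff] at hrev
    have := (hblock _).1 fun c hc => (hsame ⟨hdx, hxU⟩ hb c hc).trans (hrev c hc)
    rw [Fin.val_rev] at this
    omega
  let first : Fin n := ⟨d, by omega⟩
  let last : Fin n := ⟨U - 1, by omega⟩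
  have hfirst : d ≤ first ∧ first < U := ⟨le_rfl, by simp only [first]; omega⟩
  have hlast : d ≤ last ∧ last < U := by simp only [last]; omega
  have h1 := val_add_le_of_forall_le_iff (w := w) hdx (hsame hfirst ⟨hdx, hxU⟩)
  have h2 := val_add_le_of_forall_le_iff (w := w) (b := last)
    (by simp only [last, Fin.le_def]; omega) (hsame ⟨hdx, hxU⟩ hlast)
  have h3 := (hmirror first hfirst).1
  have h4 := (hmirror last hlast).2
  simp only [first, last] at h1 h2 h3 h4
  omega

lemma blockIdx_inv_rev_of_isWa (hw : isWa n (descCuts w) w) (p : Fin n) :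
    blockIdx w (w⁻¹ p.rev) = blockIdx w p := by
  set D := descCuts w
  set d := downcut D p
  set U := upcut n D p
  have hdp : d ≤ p := downcut_spec.2
  have hpU : p < U := (upcut_spec p.isLt).2
  have hUn : U ≤ n := upcut_le (Or.inr rfl) p.isLt
  let q : Fin n := ⟨U + d - 1 - p, by omega⟩
  have hpq : ∀ c ∈ D, c ≤ (p : ℕ) ↔ c ≤ (q : ℕ) :=
    (forall_le_iff_le_iff_downcut_le_and_lt_upcut p.isLt q.isLt).2 (by simp only [q]; omega)
  have hq := hw q
  rw [← downcut_congr hpq, ← upcut_congr p.isLt q.isLt hpq] at hq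
  have hwq : w q = p.rev := Fin.ext (by simp only [q] at hq ⊢; rw [Fin.val_rev]; omega)
  rw [← hwq, Equiv.Perm.inv_def, Equiv.symm_apply_apply, blockIdx_eq_blockIdx_iff]
  exact fun c hc => (hpq c hc).symm

lemma forall_val_add_val_add_one_eq_iff {σ : Equiv.Perm (Fin n)} :
    (∀ x : Fin n, (σ x : ℕ) + x + 1 = n) ↔ σ = Fin.revPerm := by
  rw [Equiv.ext_iff]
  refine forall_congr' fun x => ?_
  rw [Fin.revPerm_apply, Fin.ext_iff, Fin.val_rev]
  omega

lemma exists_isYoung_iff_forall_blockIdx_inv_rev :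
    (∃ v : Equiv.Perm (Fin n), isYoung w v ∧ ∀ x : Fin n, ((v * w) x : ℕ) + x + 1 = n) ↔
      ∀ p : Fin n, blockIdx w (w⁻¹ p.rev) = blockIdx w p := by
  rw [exists_congr fun v => and_congr_right' <|
    forall_val_add_val_add_one_eq_iff.trans eq_mul_inv_iff_mul_eq.symm, exists_eq_right, isYoung,
    w.surjective.forall]
  simp only [Equiv.Perm.mul_apply, Equiv.Perm.inv_def, Equiv.symm_apply_apply, Fin.revPerm_apply]

end Reversal

end DescentBlocks

open DescentBlocks in
/-- The longest element `w₀` lies in the coset (S_{J_1} × ⋯ × S_{J_{k+1}})·w of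
the Young subgroup of the descent blocks of `w` iff `w = w(a)` for the
composition `a` with S(a) = D(w). -/
theorem stmt13 (n : ℕ) (w : Equiv.Perm (Fin n)) :
    (∃ v : Equiv.Perm (Fin n), isYoung w v ∧
        ∀ x : Fin n, (((v * w) x : ℕ) + (x : ℕ) + 1 = n))
      ↔ isWa n (descCuts w) w := by
  rw [exists_isYoung_iff_forall_blockIdx_inv_rev]
  exact ⟨isWa_of_forall_blockIdx_inv_rev, blockIdx_inv_rev_of_isWa⟩
end

section
/- Let w = n, n-1, ..., n-m+1, 1, 2, ..., n-m ∈ S_n (so w^{-1} = m+1, m+2, ..., n, m, m-1, ..., 1). Then for v ∈ S_n, the descent set of vw equals the descent set of w (namely {1,...,m}) if and only if v satisfies: v(n-m+1) < v(n-m+2) < ⋯ < v(n), v(1) < v(2) < ⋯ < v(n-m), and v(1) < v(n-m+1). -/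
private lemma stmt16_chain {α : Type*} [Preorder α] (f : ℕ → α) (a b : ℕ)
    (h : ∀ i, a ≤ i → i + 1 < b → f i < f (i + 1)) :
    ∀ j i, a ≤ i → i < j → j < b → f i < f j := by
  intro j
  induction j with
  | zero => intro i _ h2 _; omega
  | succ j ih =>
    intro i hi hij hjb
    rcases Nat.lt_or_ge i j with hij' | hij'
    · exact lt_trans (ih i hi hij' (by omega)) (h j (by omega) hjb)
    · have : i = j := by omega
      subst this
      exact h i hi hjb

set_option maxHeartbeats 800000 in
/-- Let w = (n, n-1, …, n-m+1, 1, 2, …, n-m) in one-line notation.  Then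
D(vw) = D(w) = {1,…,m} iff v is increasing on positions n-m+1,…,n, increasing on
positions 1,…,n-m, and v(1) < v(n-m+1). -/
theorem stmt16 (n m : ℕ) (hm : 1 ≤ m) (hmn : m < n) (w v : Equiv.Perm (Fin n))
    (hw : ∀ p : Fin n, (w p : ℕ) = if (p : ℕ) < m then n - 1 - (p : ℕ) else (p : ℕ) - m) :
    (∀ p : Fin n × Fin n, (p.1 : ℕ) + 1 = (p.2 : ℕ) →
        ((v * w) p.2 < (v * w) p.1 ↔ (p.1 : ℕ) < m))
      ↔ ((∀ p q : Fin n, n - m ≤ (p : ℕ) → p < q → v p < v q)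
          ∧ (∀ p q : Fin n, (q : ℕ) < n - m → p < q → v p < v q)
          ∧ v ⟨0, by omega⟩ < v ⟨n - m, by omega⟩) := by
  have hn : 0 < n := by omega
  have hnmn : n - m < n := by omega
  set V : ℕ → Fin n := fun i => v ⟨i % n, Nat.mod_lt _ hn⟩ with hV
  have hVeq : ∀ (i : ℕ) (h : i < n), V i = v ⟨i, h⟩ := by
    intro i h
    simp only [hV]
    congr 1
    exact Fin.ext (Nat.mod_eq_of_lt h)
  have hvV : ∀ p : Fin n, v p = V p.val := fun p => (hVeq p.1 p.2).symm
  have w1 : ∀ k (hk : k < m), w ⟨k, by omega⟩ = ⟨n - 1 - k, by omega⟩ := by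
    intro k hk
    apply Fin.ext
    rw [hw]
    show (if k < m then n - 1 - k else k - m) = n - 1 - k
    rw [if_pos hk]
  have w2 : ∀ k (hk : k < n) (hk' : m ≤ k), w ⟨k, hk⟩ = ⟨k - m, by omega⟩ := by
    intro k hk hk'
    apply Fin.ext
    rw [hw]
    show (if k < m then n - 1 - k else k - m) = k - m
    rw [if_neg (by omega)]
  constructor
  · intro H
    have key : ∀ k (hk1 : k + 1 < n),
        (v (w ⟨k + 1, hk1⟩) < v (w ⟨k, by omega⟩) ↔ k < m) := by
      intro k hk1
      simpa [Equiv.Perm.mul_apply] using H (⟨k, by omega⟩, ⟨k + 1, hk1⟩) rfl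
    -- A : increasing on the top block, consecutive
    have A : ∀ i, n - m ≤ i → i + 1 < n → V i < V (i + 1) := by
      intro i hi hi1
      have hk1 : (n - 2 - i) + 1 < n := by omega
      have h := (key (n - 2 - i) hk1).mpr (by omega)
      rw [w1 (n - 2 - i + 1) (by omega), w1 (n - 2 - i) (by omega)] at h
      rw [← hVeq _ (by omega), ← hVeq _ (by omega)] at h
      have e1 : n - 1 - (n - 2 - i + 1) = i := by omega
      have e2 : n - 1 - (n - 2 - i) = i + 1 := by omega
      rw [e1, e2] at h
      exact h
    -- C : increasing on the first block, consecutive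
    have C : ∀ i, i + 1 < n - m → V i < V (i + 1) := by
      intro i hi
      have hk1 : (i + m) + 1 < n := by omega
      have h := (key (i + m) hk1).not.mpr (by omega)
      rw [w2 (i + m + 1) (by omega) (by omega), w2 (i + m) (by omega) (by omega)] at h
      rw [← hVeq _ (by omega), ← hVeq _ (by omega)] at h
      have e1 : i + m + 1 - m = i + 1 := by omega
      have e2 : i + m - m = i := by omega
      rw [e1, e2] at h
      have hle : V i ≤ V (i + 1) := le_of_not_gt h
      have hne : V i ≠ V (i + 1) := by
        intro hc
        have := v.injective ((hVeq i (by omega)).symm.trans (hc.trans (hVeq (i + 1) (by omega))))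
        simp only [Fin.mk.injEq] at this
        omega
      exact lt_of_le_of_ne hle hne
    refine ⟨?_, ?_, ?_⟩
    · intro p q hp hpq
      rw [hvV p, hvV q]
      exact stmt16_chain V (n - m) n A q.val p.val hp hpq q.2
    · intro p q hq hpq
      rw [hvV p, hvV q]
      exact stmt16_chain V 0 (n - m) (fun i _ hi => C i hi) q.val p.val (Nat.zero_le _) hpq hq
    · -- from key at k = m - 1
      have hk1 : (m - 1) + 1 < n := by omega
      have h := (key (m - 1) hk1).mpr (by omega)
      rw [w2 (m - 1 + 1) (by omega) (by omega), w1 (m - 1) (by omega)] at h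
      rw [← hVeq _ (by omega), ← hVeq _ (by omega)] at h
      have e1 : m - 1 + 1 - m = 0 := by omega
      have e2 : n - 1 - (m - 1) = n - m := by omega
      rw [e1, e2] at h
      rw [show (⟨0, by omega⟩ : Fin n) = ⟨0 % n, Nat.mod_lt _ hn⟩ from Fin.ext (by simp [Nat.mod_eq_of_lt hn]),
        show (⟨n - m, by omega⟩ : Fin n) = ⟨(n - m) % n, Nat.mod_lt _ hn⟩ from
          Fin.ext (by simp [Nat.mod_eq_of_lt (show n - m < n by omega)])]
      exact h
  · rintro ⟨h1, h2, h3⟩ p pe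
    obtain ⟨p1, p2⟩ := p
    simp only at pe
    simp only [Equiv.Perm.mul_apply]
    have hp1 : (p1 : ℕ) + 1 < n := by omega
    have hwa : (w p1 : ℕ) = if (p1 : ℕ) < m then n - 1 - (p1 : ℕ) else (p1 : ℕ) - m := hw p1
    have hwb : (w p2 : ℕ) = if (p2 : ℕ) < m then n - 1 - (p2 : ℕ) else (p2 : ℕ) - m := hw p2
    rcases Nat.lt_or_ge ((p1 : ℕ) + 1) m with hc | hc
    · -- k + 1 < m : descent holds
      have hav : (w p1 : ℕ) = n - 1 - (p1 : ℕ) := by rw [hwa, if_pos (show (p1 : ℕ) < m by omega)]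
      have hbv : (w p2 : ℕ) = n - 2 - (p1 : ℕ) := by rw [hwb, if_pos (show (p2 : ℕ) < m by omega)]; omega
      have : v (w p2) < v (w p1) := by
        apply h1 (w p2) (w p1)
        · omega
        · rw [Fin.lt_def]; omega
      constructor
      · intro _; omega
      · intro _; exact this
    · rcases Nat.lt_or_ge (p1 : ℕ) m with hc' | hc'
      · -- k = m - 1 : descent holds
        have hk : (p1 : ℕ) = m - 1 := by omega
        have ea : w p1 = ⟨n - m, hnmn⟩ := by
          apply Fin.ext
          rw [hwa, if_pos (show (p1 : ℕ) < m by omega)]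
          simp only [Fin.val_mk]
          omega
        have eb : w p2 = ⟨0, hn⟩ := by
          apply Fin.ext
          rw [hwb, if_neg (show ¬ (p2 : ℕ) < m by omega)]
          simp only [Fin.val_mk]
          omega
        have : v (w p2) < v (w p1) := by rw [ea, eb]; exact h3
        constructor
        · intro _; omega
        · intro _; exact this
      · -- k ≥ m : no descent
        have hav : (w p1 : ℕ) = (p1 : ℕ) - m := by rw [hwa, if_neg (show ¬ (p1 : ℕ) < m by omega)]
        have hbv : (w p2 : ℕ) = (p1 : ℕ) + 1 - m := by rw [hwb, if_neg (show ¬ (p2 : ℕ) < m by omega)]; omega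
        have hvv : v (w p1) < v (w p2) := by
          apply h2 (w p1) (w p2)
          · omega
          · rw [Fin.lt_def]; omega
        constructor
        · intro hlt; exact absurd hvv (lt_asymm hlt)
        · intro hlt; omega
end
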